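/- Let 0 < λ ≤ α < 1 and let D be a directed graph on 2n vertices that is not α-extremal. Then for every X ⊆ V(D) with |X| ≤ λn, the induced subgraph D′ = D − X is not (α − λ)-extremal. -/
import Mathlib


/-- A digraph on `N` vertices is `α`-extremal if there are `A, B ⊆ V` with
`(1-α)N/2 ≤ |A|,|B| ≤ (1+α)N/2` such that every vertex of `A` has at most `αN/2`
out-neighbours in `B` and every vertex of `B` has at most `αN/2` in-neighbours in `A`. -/
def AlphaExtremal (α : ℝ) {V : Type*} (E : V → V → Prop) : Prop :=
  ∃ A B : Set V,
    (1 - α) * (Nat.card V : ℝ) / 2 ≤ (A.ncard : ℝ) ∧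
    (A.ncard : ℝ) ≤ (1 + α) * (Nat.card V : ℝ) / 2 ∧
    (1 - α) * (Nat.card V : ℝ) / 2 ≤ (B.ncard : ℝ) ∧
    (B.ncard : ℝ) ≤ (1 + α) * (Nat.card V : ℝ) / 2 ∧
    (∀ a ∈ A, ({b ∈ B | E a b}.ncard : ℝ) ≤ α * (Nat.card V : ℝ) / 2) ∧
    (∀ b ∈ B, ({a ∈ A | E a b}.ncard : ℝ) ≤ α * (Nat.card V : ℝ) / 2)

theorem statement6 (α lam : ℝ) (hlam : 0 < lam) (hlamα : lam ≤ α) (hα : α < 1)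
    (n : ℕ) (V : Type) (E : V → V → Prop)
    (hcard : Nat.card V = 2 * n) (hloop : ∀ v, ¬ E v v)
    (hnonext : ¬ AlphaExtremal α E) :
    ∀ X : Set V, (X.ncard : ℝ) ≤ lam * n →
      ¬ AlphaExtremal (α - lam) (fun a b : {v : V // v ∉ X} => E a.1 b.1) := by
  intro X hX hext
  rcases Nat.eq_zero_or_pos n with hn | hn
  · apply hnonext
    refine ⟨∅, ∅, ?_⟩
    subst hn
    simp [hcard]
  have hNpos : 0 < Nat.card V := by omega
  have hfin : Finite V := (Nat.card_pos_iff.mp hNpos).2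
  obtain ⟨A', B', hA1, hA2, hB1, hB2, hAB, hBA⟩ := hext
  -- cardinality of the subtype
  have hmeq : Nat.card {v : V // v ∉ X} = Xᶜ.ncard := by
    rw [← Nat.card_coe_set_eq]
    exact Nat.card_congr (Equiv.subtypeEquivRight (fun v => (Set.mem_compl_iff X v).symm))
  have hxN : X.ncard ≤ Nat.card V := by
    rw [← Set.ncard_univ]
    exact Set.ncard_le_ncard (Set.subset_univ X) Set.finite_univ
  have hcompl : X.ncard + Xᶜ.ncard = Nat.card V := Set.ncard_add_ncard_compl X
  have hm : (Nat.card {v : V // v ∉ X} : ℝ) = (Nat.card V : ℝ) - X.ncard := by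
    rw [hmeq]
    have : Xᶜ.ncard = Nat.card V - X.ncard := by omega
    rw [this]
    push_cast [Nat.cast_sub hxN]
    ring
  set N : ℝ := (Nat.card V : ℝ) with hNdef
  have hN2n : N = 2 * n := by rw [hNdef, hcard]; push_cast; ring
  have hx2 : (X.ncard : ℝ) ≤ lam * N / 2 := by rw [hN2n]; linarith
  have hx0 : (0:ℝ) ≤ X.ncard := Nat.cast_nonneg _
  have hN0 : (0:ℝ) ≤ N := Nat.cast_nonneg _
  rw [hm] at hA1 hA2 hB1 hB2 hAB hBA
  have p1 : 0 ≤ (α - lam) * (X.ncard : ℝ) := mul_nonneg (by linarith) hx0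
  have p2 : 0 ≤ lam * N := mul_nonneg hlam.le hN0
  have p3 : 0 ≤ (1 + α - lam) * (X.ncard : ℝ) := mul_nonneg (by linarith) hx0
  apply hnonext
  refine ⟨Subtype.val '' A', Subtype.val '' B', ?_, ?_, ?_, ?_, ?_, ?_⟩
  · rw [Set.ncard_image_of_injective A' Subtype.val_injective]
    linarith [hA1, p1, p2, hx2]
  · rw [Set.ncard_image_of_injective A' Subtype.val_injective]
    linarith [hA2, p2, p3]
  · rw [Set.ncard_image_of_injective B' Subtype.val_injective]
    linarith [hB1, p1, p2, hx2]
  · rw [Set.ncard_image_of_injective B' Subtype.val_injective]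
    linarith [hB2, p2, p3]
  · rintro a ⟨a0, ha0, rfl⟩
    have himg : {b ∈ Subtype.val '' B' | E a0.1 b} = Subtype.val '' {b ∈ B' | E a0.1 b.1} := by
      ext b
      constructor
      · rintro ⟨⟨b0, hb0, rfl⟩, he⟩
        exact ⟨b0, ⟨hb0, he⟩, rfl⟩
      · rintro ⟨b0, ⟨hb0, he⟩, rfl⟩
        exact ⟨⟨b0, hb0, rfl⟩, he⟩
    rw [himg, Set.ncard_image_of_injective _ Subtype.val_injective]
    have := hAB a0 ha0
    linarith [this, p1, p2]
  · rintro b ⟨b0, hb0, rfl⟩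
    have himg : {a ∈ Subtype.val '' A' | E a b0.1} = Subtype.val '' {a ∈ A' | E a.1 b0.1} := by
      ext a
      constructor
      · rintro ⟨⟨a0, ha0, rfl⟩, he⟩
        exact ⟨a0, ⟨ha0, he⟩, rfl⟩
      · rintro ⟨a0, ⟨ha0, he⟩, rfl⟩
        exact ⟨⟨a0, ha0, rfl⟩, he⟩
    rw [himg, Set.ncard_image_of_injective _ Subtype.val_injective]
    have := hBA b0 hb0
    linarith [this, p1, p2]
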